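/- arXiv:2006.13700 — 8 statements merged into one kernel-verified Lean document; each statement's English description precedes it below -/
import Mathlib

section
/- Let m, n be positive integers, let π ∈ ℝ^m be a probability vector, and let K be an m×m row-stochastic matrix. Then for every y ∈ S_{m,n}: ∑_{x ∈ S_{m,n}} Mult(n,π)(x) · M(x, K, y) = Mult(n, Kᵀπ)(y), where (Kᵀπ)^{(j)} = ∑_{i=1}^m π^{(i)} K^{(i,j)}. In words: mixing the multinomial-rows transition kernel M(·,K,·) over a Mult(n,π) initial distribution yields the multinomial distribution Mult(n, Kᵀπ). (This is the prediction-step lemma: here Kᵀπ arises because the expected normalized count vector of Mult(n,π) is π itself.) -/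
open Finset

/-- The multinomial probability mass function `Mult(n, π)` evaluated at `x ∈ S_{m,n}`. -/
noncomputable def mult {m : ℕ} (n : ℕ) (π : Fin m → ℝ) (x : Fin m → ℕ) : ℝ :=
  (Nat.factorial n : ℝ) * ∏ i, π i ^ x i / (Nat.factorial (x i) : ℝ)

/-- `S_{m,n}`: the (finite) set of vectors `x : Fin m → ℕ` with `∑ i, x i = n`. -/
def vecSet (m n : ℕ) : Finset (Fin m → ℕ) :=
  (Fintype.piFinset fun _ : Fin m => Finset.range (n + 1)).filter fun x => ∑ i, x i = n

/-- Matrices `Z` with nonnegative integer entries, row sums `x` and column sums `y`. -/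
def transSet {m : ℕ} (x y : Fin m → ℕ) : Finset (Fin m → Fin m → ℕ) :=
  (Fintype.piFinset fun _ : Fin m => Fintype.piFinset fun _ : Fin m =>
      Finset.range (∑ i, x i + 1)).filter
    fun Z => (∀ i, ∑ j, Z i j = x i) ∧ (∀ j, ∑ i, Z i j = y j)

/-- `M(x, K, y)`: the pmf on `S_{m,n}` of the column-sum vector of a random matrix whose
rows are independent, the `i`-th row distributed `Mult(x⁽ⁱ⁾, K⁽ⁱ'⁾)`. -/
noncomputable def kerM {m : ℕ} (K : Fin m → Fin m → ℝ) (x y : Fin m → ℕ) : ℝ :=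
  ∑ Z ∈ transSet x y, ∏ i,
    (Nat.factorial (x i) : ℝ) * ∏ j, K i j ^ Z i j / (Nat.factorial (Z i j) : ℝ)

/-- Mixing the multinomial-rows transition kernel `M(·, K, ·)` over a `Mult(n, π)` initial
distribution yields the multinomial distribution `Mult(n, Kᵀπ)`. -/
theorem statement0 (m n : ℕ) (hm : 0 < m) (hn : 0 < n)
    (π : Fin m → ℝ) (hπ0 : ∀ i, 0 ≤ π i) (hπ1 : ∑ i, π i = 1)
    (K : Fin m → Fin m → ℝ) (hK0 : ∀ i j, 0 ≤ K i j) (hK1 : ∀ i, ∑ j, K i j = 1)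
    (y : Fin m → ℕ) (hy : ∑ i, y i = n) :
    ∑ x ∈ vecSet m n, mult n π x * kerM K x y
      = mult n (fun j => ∑ i, π i * K i j) y := by
  classical
  set bigS : Finset (Fin m → Fin m → ℕ) :=
    (Fintype.piFinset fun _ : Fin m => Fintype.piFinset fun _ : Fin m =>
      Finset.range (n + 1)).filter (fun Z => ∀ j, ∑ i, Z i j = y j) with hbigS
  have hmemBig : ∀ Z, Z ∈ bigS ↔ (∀ i j, Z i j < n + 1) ∧ ∀ j, ∑ i, Z i j = y j := by
    intro Z
    simp [hbigS, Fintype.mem_piFinset, Finset.mem_range]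
  -- Step A+B: rewrite LHS as a single sum over bigS
  have stepAB : ∑ x ∈ vecSet m n, mult n π x * kerM K x y
      = ∑ Z ∈ bigS, mult n π (fun i => ∑ j, Z i j) *
          ∏ i, (Nat.factorial (∑ j, Z i j) : ℝ) *
            ∏ j, K i j ^ Z i j / (Nat.factorial (Z i j) : ℝ) := by
    rw [← Finset.sum_fiberwise_of_maps_to (g := fun Z : Fin m → Fin m → ℕ => fun i => ∑ j, Z i j)
      (t := vecSet m n) ?_]
    · refine Finset.sum_congr rfl fun x hx => ?_
      have hxs : ∑ i, x i = n := (Finset.mem_filter.1 hx).2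
      have hset : bigS.filter (fun Z => (fun i => ∑ j, Z i j) = x) = transSet x y := by
        ext Z
        simp only [Finset.mem_filter, hmemBig, transSet, Fintype.mem_piFinset,
          Finset.mem_range, hxs, funext_iff]
        tauto
      rw [hset, kerM, Finset.mul_sum]
      refine Finset.sum_congr rfl fun Z hZ => ?_
      have hrow : ∀ i, ∑ j, Z i j = x i := ((Finset.mem_filter.1 hZ).2).1
      simp only [hrow]
    · intro Z hZ
      obtain ⟨hb, hc⟩ := (hmemBig Z).1 hZ
      have htot : ∑ i, ∑ j, Z i j = n := by
        rw [Finset.sum_comm]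
        simp only [hc]
        exact hy
      refine Finset.mem_filter.2 ⟨Fintype.mem_piFinset.2 fun i => Finset.mem_range.2 ?_, htot⟩
      show ∑ j, Z i j < n + 1
      have h1 : ∑ j, Z i j ≤ ∑ i, ∑ j, Z i j :=
        Finset.single_le_sum (f := fun i => ∑ j, Z i j)
          (fun i _ => Nat.zero_le _) (Finset.mem_univ i)
      omega
  rw [stepAB]
  -- Step C: simplify the summand
  have stepC : ∀ Z ∈ bigS, mult n π (fun i => ∑ j, Z i j) *
      ∏ i, (Nat.factorial (∑ j, Z i j) : ℝ) *
        ∏ j, K i j ^ Z i j / (Nat.factorial (Z i j) : ℝ)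
      = (Nat.factorial n : ℝ) *
          ∏ j, ∏ i, (π i * K i j) ^ Z i j / (Nat.factorial (Z i j) : ℝ) := by
    intro Z hZ
    rw [mult, mul_assoc, ← Finset.prod_mul_distrib]
    congr 1
    rw [Finset.prod_comm]
    refine Finset.prod_congr rfl fun i _ => ?_
    have hfac : (Nat.factorial (∑ j, Z i j) : ℝ) ≠ 0 := Nat.cast_ne_zero.2 (Nat.factorial_ne_zero _)
    have key : ∏ j, (π i * K i j) ^ Z i j / (Nat.factorial (Z i j) : ℝ)
        = π i ^ (∑ j, Z i j) * ∏ j, K i j ^ Z i j / (Nat.factorial (Z i j) : ℝ) := by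
      rw [← Finset.prod_pow_eq_pow_sum, ← Finset.prod_mul_distrib]
      exact Finset.prod_congr rfl fun j _ => by rw [mul_pow, mul_div_assoc]
    rw [key]
    field_simp
  rw [Finset.sum_congr rfl stepC, ← Finset.mul_sum]
  -- Step D: expand the RHS via the multinomial theorem
  rw [mult]
  congr 1
  have hyle : ∀ j, y j ≤ n := fun j => by
    have := Finset.single_le_sum (f := y) (fun i _ => Nat.zero_le _) (Finset.mem_univ j)
    omega
  have stepD : ∀ j : Fin m, (fun j => ∑ i, π i * K i j) j ^ y j / (Nat.factorial (y j) : ℝ)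
      = ∑ k ∈ Finset.piAntidiag Finset.univ (y j),
          ∏ i, (π i * K i j) ^ k i / (Nat.factorial (k i) : ℝ) := by
    intro j
    rw [Finset.sum_pow_eq_sum_piAntidiag, Finset.sum_div]
    refine Finset.sum_congr rfl fun k hk => ?_
    have hks : ∑ i, k i = y j := (Finset.mem_piAntidiag.1 hk).1
    have hspec : (∏ i, Nat.factorial (k i)) * Nat.multinomial Finset.univ k
        = Nat.factorial (y j) := by
      rw [Nat.multinomial_spec, hks]
    have hprodne : (∏ i, (Nat.factorial (k i) : ℝ)) ≠ 0 :=
      Finset.prod_ne_zero_iff.2 fun i _ => Nat.cast_ne_zero.2 (Nat.factorial_ne_zero _)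
    rw [← hspec]
    push_cast
    rw [Finset.prod_div_distrib]
    have hmne : (Nat.multinomial Finset.univ k : ℝ) ≠ 0 :=
      Nat.cast_ne_zero.2 (Nat.multinomial_pos _ _).ne'
    field_simp
  simp only [stepD]
  rw [Finset.prod_univ_sum]
  -- Step E: reindex via transposition
  refine Finset.sum_nbij' (i := fun Z => fun j i => Z i j) (j := fun W => fun i j => W j i)
    ?_ ?_ ?_ ?_ ?_
  · intro Z hZ
    obtain ⟨hb, hc⟩ := (hmemBig Z).1 hZ
    refine Fintype.mem_piFinset.2 fun j => Finset.mem_piAntidiag.2 ⟨hc j, fun i _ => Finset.mem_univ i⟩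
  · intro W hW
    have hW' := Fintype.mem_piFinset.1 hW
    have hcs : ∀ j, ∑ i, W j i = y j := fun j => (Finset.mem_piAntidiag.1 (hW' j)).1
    refine (hmemBig _).2 ⟨fun i j => ?_, fun j => hcs j⟩
    show W j i < n + 1
    have h1 : W j i ≤ ∑ i, W j i :=
      Finset.single_le_sum (f := W j) (fun i _ => Nat.zero_le _) (Finset.mem_univ i)
    have h2 := hcs j
    have h3 := hyle j
    omega
  · intro Z hZ; rfl
  · intro W hW; rfl
  · intro Z hZ; rfl
end

section
/- Let m, n be positive integers, π ∈ ℝ^m a probability vector, and q ∈ [0,1]^m with πᵀq < 1. Define the joint probability mass function p(x,y) = Mult(n,π)(x) · ∏_{j=1}^m C(x^{(j)}, y^{(j)}) (q^{(j)})^{y^{(j)}} (1−q^{(j)})^{x^{(j)}−y^{(j)}} for x ∈ S_{m,n} and y ∈ ℕ^m with y^{(j)} ≤ x^{(j)} for all j (and p(x,y)=0 otherwise), and let p(y) = ∑_{x ∈ S_{m,n}} p(x,y) be the marginal. Then for every y with p(y) > 0 and every x ∈ S_{m,n}: if y^{(j)} ≤ x^{(j)} for all j, then p(x,y)/p(y)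 = Mult(n − ∑_{j} y^{(j)}, π̃)(x − y), where π̃^{(j)} = π^{(j)}(1−q^{(j)})/(1 − πᵀq), and p(x,y)/p(y) = 0 otherwise. That is, the conditional distribution of x given y is that of y + x* with x* ∼ Mult(n − 1ᵀy, π∘(1−q)/(1−πᵀq)). -/
open Finset

/-- The joint probability mass function `p(x, y)`: `x ∼ Mult(n, π)` and, given `x`, the
entries of `y` are conditionally independent with `y⁽ʲ⁾ ∼ Bin(x⁽ʲ⁾, q⁽ʲ⁾)`. -/
noncomputable def jointP {m : ℕ} (n : ℕ) (π q : Fin m → ℝ) (x y : Fin m → ℕ) : ℝ :=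
  if ∀ j, y j ≤ x j then
    mult n π x *
      ∏ j, ((x j).choose (y j) : ℝ) * q j ^ y j * (1 - q j) ^ (x j - y j)
  else 0

lemma mem_vecSet {m n : ℕ} {x : Fin m → ℕ} : x ∈ vecSet m n ↔ ∑ i, x i = n := by
  constructor
  · exact fun h => (Finset.mem_filter.1 h).2
  · intro h
    refine Finset.mem_filter.2 ⟨Fintype.mem_piFinset.2 fun i => ?_, h⟩
    exact Finset.mem_range.2 (Nat.lt_succ_of_le
      (h ▸ Finset.single_le_sum (fun _ _ => Nat.zero_le _) (Finset.mem_univ i)))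

lemma key_sum (m r : ℕ) (a : Fin m → ℝ) :
    ∑ z ∈ vecSet m r, ∏ j, a j ^ z j / ((z j).factorial : ℝ)
      = (∑ j, a j) ^ r / (r.factorial : ℝ) := by
  have hvs : vecSet m r = Finset.univ.piAntidiag r := by
    ext z; simp [mem_vecSet, Finset.mem_piAntidiag]
  have hr : (r.factorial : ℝ) ≠ 0 := Nat.cast_ne_zero.2 (Nat.factorial_ne_zero _)
  rw [eq_div_iff hr, Finset.sum_pow_eq_sum_piAntidiag, hvs, Finset.sum_mul]
  refine Finset.sum_congr rfl fun z hz => ?_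
  have hsz : ∑ i, z i = r := by
    simpa using (Finset.mem_piAntidiag.1 hz).1
  have hspec := Nat.multinomial_spec Finset.univ z
  rw [hsz] at hspec
  have hspecR : (∏ i, ((z i).factorial : ℝ)) * (Nat.multinomial Finset.univ z : ℝ)
      = (r.factorial : ℝ) := by exact_mod_cast congrArg (Nat.cast : ℕ → ℝ) hspec
  have hprodne : (∏ i, ((z i).factorial : ℝ)) ≠ 0 :=
    Finset.prod_ne_zero_iff.2 fun i _ => Nat.cast_ne_zero.2 (Nat.factorial_ne_zero _)
  rw [Finset.prod_div_distrib]
  field_simp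
  rw [← hspecR]
  ring

lemma jointP_eq {m : ℕ} (n : ℕ) (π q : Fin m → ℝ) (x y : Fin m → ℕ) (hxy : ∀ j, y j ≤ x j) :
    jointP n π q x y
      = (n.factorial : ℝ) * (∏ j, (π j * q j) ^ y j / ((y j).factorial : ℝ))
          * ∏ j, (π j * (1 - q j)) ^ (x j - y j) / (((x j - y j)).factorial : ℝ) := by
  rw [jointP, if_pos hxy, mult, mul_assoc, mul_assoc]
  congr 1
  rw [← Finset.prod_mul_distrib, ← Finset.prod_mul_distrib]
  refine Finset.prod_congr rfl fun j _ => ?_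
  have h := hxy j
  rw [Nat.cast_choose ℝ h]
  have h1 : π j ^ x j = π j ^ y j * π j ^ (x j - y j) := by
    rw [← pow_add, Nat.add_sub_cancel' h]
  have h2 : ((y j).factorial : ℝ) ≠ 0 := Nat.cast_ne_zero.2 (Nat.factorial_ne_zero _)
  have h3 : (((x j - y j)).factorial : ℝ) ≠ 0 := Nat.cast_ne_zero.2 (Nat.factorial_ne_zero _)
  have h4 : (((x j)).factorial : ℝ) ≠ 0 := Nat.cast_ne_zero.2 (Nat.factorial_ne_zero _)
  field_simp [h1, mul_pow]
  rw [h1, mul_pow, mul_pow]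
  ring

lemma denom_eq {m : ℕ} (n : ℕ) (π q : Fin m → ℝ) (y : Fin m → ℕ) (hyn : ∑ j, y j ≤ n) :
    ∑ x ∈ vecSet m n, jointP n π q x y
      = (n.factorial : ℝ) * (∏ j, (π j * q j) ^ y j / ((y j).factorial : ℝ))
          * ((∑ j, π j * (1 - q j)) ^ (n - ∑ j, y j) / ((n - ∑ j, y j).factorial : ℝ)) := by
  classical
  rw [← Finset.sum_filter_add_sum_filter_not (vecSet m n) (fun x => ∀ j, y j ≤ x j)]
  have h2 : ∑ x ∈ (vecSet m n).filter (fun x => ¬ ∀ j, y j ≤ x j), jointP n π q x y = 0 :=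
    Finset.sum_eq_zero fun x hx => by
      rw [jointP, if_neg (Finset.mem_filter.1 hx).2]
  rw [h2, add_zero]
  have hbij : ∑ x ∈ (vecSet m n).filter (fun x => ∀ j, y j ≤ x j), jointP n π q x y
      = ∑ z ∈ vecSet m (n - ∑ j, y j), jointP n π q (z + y) y := by
    refine Finset.sum_bij' (fun x _ => x - y) (fun z _ => z + y) ?_ ?_ ?_ ?_ ?_
    · intro x hx
      obtain ⟨hx1, hx2⟩ := Finset.mem_filter.1 hx
      refine mem_vecSet.2 ?_
      rw [show (∑ i, (x - y) i) = ∑ i, (x i - y i) from rfl,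
        Finset.sum_tsub_distrib _ (fun i _ => hx2 i), mem_vecSet.1 hx1]
    · intro z hz
      refine Finset.mem_filter.2 ⟨mem_vecSet.2 ?_, fun j => by simp⟩
      rw [show (∑ i, (z + y) i) = ∑ i, (z i + y i) from rfl, Finset.sum_add_distrib,
        mem_vecSet.1 hz, Nat.sub_add_cancel hyn]
    · intro x hx
      funext i
      exact Nat.sub_add_cancel ((Finset.mem_filter.1 hx).2 i)
    · intro z hz
      funext i
      simp
    · intro x hx
      congr 1
      funext i
      exact (Nat.sub_add_cancel ((Finset.mem_filter.1 hx).2 i)).symm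
  rw [hbij]
  have h3 : ∀ z ∈ vecSet m (n - ∑ j, y j),
      jointP n π q (z + y) y
        = (n.factorial : ℝ) * (∏ j, (π j * q j) ^ y j / ((y j).factorial : ℝ))
            * ∏ j, (π j * (1 - q j)) ^ (z j) / ((z j).factorial : ℝ) := by
    intro z _
    rw [jointP_eq n π q (z + y) y (fun j => by simp)]
    congr 1
    refine Finset.prod_congr rfl fun j _ => ?_
    have : (z + y) j - y j = z j := by simp
    rw [this]
  rw [Finset.sum_congr rfl h3, ← Finset.mul_sum, key_sum]

/-- The conditional distribution of `x` given `y` is that of `y + x*` with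
`x* ∼ Mult(n − 1ᵀy, π∘(1−q)/(1−πᵀq))`. -/
theorem statement1 (m n : ℕ) (hm : 0 < m) (hn : 0 < n)
    (π : Fin m → ℝ) (hπ0 : ∀ i, 0 ≤ π i) (hπ1 : ∑ i, π i = 1)
    (q : Fin m → ℝ) (hq0 : ∀ i, 0 ≤ q i) (hq1 : ∀ i, q i ≤ 1)
    (hpq : ∑ i, π i * q i < 1)
    (y : Fin m → ℕ) (hy : 0 < ∑ x ∈ vecSet m n, jointP n π q x y)
    (x : Fin m → ℕ) (hx : ∑ i, x i = n) :
    ((∀ j, y j ≤ x j) →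
      jointP n π q x y / (∑ z ∈ vecSet m n, jointP n π q z y)
        = mult (n - ∑ j, y j)
            (fun j => π j * (1 - q j) / (1 - ∑ i, π i * q i))
            (fun j => x j - y j)) ∧
    ((¬ ∀ j, y j ≤ x j) →
      jointP n π q x y / (∑ z ∈ vecSet m n, jointP n π q z y) = 0) := by
  constructor
  · intro hxy
    have hyn : ∑ j, y j ≤ n := by
      calc ∑ j, y j ≤ ∑ j, x j := Finset.sum_le_sum fun j _ => hxy j
        _ = n := hx
    set k := ∑ j, y j with hk
    set r := n - k with hr
    set t := ∑ i, π i * q i with ht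
    have htpos : 0 < 1 - t := by linarith
    have htne : (1 - t) ≠ 0 := ne_of_gt htpos
    have hsum : ∑ j, π j * (1 - q j) = 1 - t := by
      simp only [mul_sub, mul_one, Finset.sum_sub_distrib, hπ1, ht]
    have hzsum : ∑ j, (x j - y j) = r := by
      rw [Finset.sum_tsub_distrib _ (fun j _ => hxy j), hx]
    -- numerator
    have hnum := jointP_eq n π q x y hxy
    -- denominator
    have hden := denom_eq n π q y hyn
    rw [hsum] at hden
    set A := ∏ j, (π j * q j) ^ y j / ((y j).factorial : ℝ) with hA
    set P := ∏ j, (π j * (1 - q j)) ^ (x j - y j) / (((x j - y j)).factorial : ℝ) with hP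
    have hrfacne : (r.factorial : ℝ) ≠ 0 := Nat.cast_ne_zero.2 (Nat.factorial_ne_zero _)
    have hdenne : (∑ z ∈ vecSet m n, jointP n π q z y) ≠ 0 := ne_of_gt hy
    have hcne : (n.factorial : ℝ) * A ≠ 0 := by
      intro h
      rw [hden, h, zero_mul] at hdenne
      exact hdenne rfl
    -- RHS
    have hrhs : mult r (fun j => π j * (1 - q j) / (1 - t)) (fun j => x j - y j)
        = (r.factorial : ℝ) * (P * ((1 - t)⁻¹) ^ r) := by
      rw [mult]
      congr 1
      rw [hP, ← hzsum, ← Finset.prod_pow_eq_pow_sum, ← Finset.prod_mul_distrib]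
      refine Finset.prod_congr rfl fun j _ => ?_
      rw [div_pow, inv_pow]
      ring
    rw [hnum, hden, hrhs]
    have htrne : (1 - t) ^ r ≠ 0 := pow_ne_zero _ htne
    have hAne : A ≠ 0 := right_ne_zero_of_mul hcne
    rw [← hk, ← hr]
    field_simp
    rw [one_div, inv_pow, mul_assoc, mul_inv_cancel₀ htrne, mul_one]
  · intro hxy
    rw [jointP, if_neg hxy, zero_div]
end

section
/- Let m, n be positive integers, π ∈ ℝ^m a probability vector, and q ∈ [0,1]^m with πᵀq < 1. Define the joint probability mass function p(x,y) = Mult(n,π)(x) · ∏_{j=1}^m C(x^{(j)}, y^{(j)}) (q^{(j)})^{y^{(j)}} (1−q^{(j)})^{x^{(j)}−y^{(j)}} for x ∈ S_{m,n} and y ∈ ℕ^m with y ≤ x componentwise (and 0 otherwise), and let p(y) = ∑_{x ∈ S_{m,n}} p(x,y). Then for every y ∈ ℕ^m with ∑_j y^{(j)} ≤ n and every coordinate j ∈ {1,…,m}: ∑_{x ∈ S_{m,n}} x^{(j)} p(x,y) = p(y) · [ y^{(j)} + (n − ∑_i y^{(i)}) · π^{(j)}(1−q^{(j)})/(1 −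 πᵀq) ]. That is, the conditional mean of x given y equals y + (n − 1ᵀy) · π∘(1−q)/(1−πᵀq). -/
open Finset

lemma vecSet_eq_piAntidiag (m n : ℕ) : vecSet m n = Finset.piAntidiag Finset.univ n := by
  ext x
  simp [mem_vecSet, Finset.mem_piAntidiag]

/-- multinomial-theorem identity. -/
lemma sumC {m : ℕ} (a : Fin m → ℝ) (N : ℕ) :
    ∑ z ∈ vecSet m N, ∏ i, a i ^ z i / (Nat.factorial (z i) : ℝ)
      = (∑ i, a i) ^ N / (Nat.factorial N : ℝ) := by
  rw [Finset.sum_pow_eq_sum_piAntidiag, ← vecSet_eq_piAntidiag, Finset.sum_div]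
  refine Finset.sum_congr rfl fun z hz => ?_
  have hsum : ∑ i, z i = N := mem_vecSet.1 hz
  have hspec : ((∏ i, Nat.factorial (z i)) : ℕ) * Nat.multinomial Finset.univ z = Nat.factorial N := by
    rw [Nat.multinomial_spec, hsum]
  have hprodne : ((∏ i, Nat.factorial (z i) : ℕ) : ℝ) ≠ 0 := by
    positivity
  have hNne : ((Nat.factorial N : ℕ) : ℝ) ≠ 0 := by positivity
  have hmul : ((Nat.multinomial Finset.univ z : ℕ) : ℝ)
      = (Nat.factorial N : ℝ) / ((∏ i, Nat.factorial (z i) : ℕ) : ℝ) := by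
    rw [eq_div_iff hprodne]
    rw [mul_comm]
    exact_mod_cast hspec
  rw [Finset.prod_div_distrib, hmul]
  push_cast
  field_simp

lemma sumD {m : ℕ} (a : Fin m → ℝ) (N : ℕ) (j : Fin m) :
    ∑ z ∈ vecSet m (N + 1), (z j : ℝ) * ∏ i, a i ^ z i / (Nat.factorial (z i) : ℝ)
      = a j * ((∑ i, a i) ^ N / (Nat.factorial N : ℝ)) := by
  classical
  set δ : Fin m → ℕ := fun i => if i = j then 1 else 0 with hδ
  have hδsum : ∑ i, δ i = 1 := by simp [hδ]
  have h1 : ∑ z ∈ vecSet m (N + 1), (z j : ℝ) * ∏ i, a i ^ z i / (Nat.factorial (z i) : ℝ)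
      = ∑ z ∈ (vecSet m (N + 1)).filter (fun z => z j ≠ 0),
          (z j : ℝ) * ∏ i, a i ^ z i / (Nat.factorial (z i) : ℝ) := by
    refine (Finset.sum_subset (Finset.filter_subset _ _) fun z hz hz' => ?_).symm
    have : z j = 0 := by
      by_contra h
      exact hz' (Finset.mem_filter.2 ⟨hz, h⟩)
    simp [this]
  rw [h1, ← sumC a N, Finset.mul_sum]
  refine (Finset.sum_nbij' (i := fun w => w + δ) (j := fun z => z - δ) ?_ ?_ ?_ ?_ ?_).symm
  · intro w hw
    refine Finset.mem_filter.2 ⟨mem_vecSet.2 ?_, ?_⟩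
    · have h2 : ∀ i, (w + δ) i = w i + δ i := fun i => rfl
      simp_rw [h2, Finset.sum_add_distrib, hδsum, mem_vecSet.1 hw]
    · show (w + δ) j ≠ 0
      show w j + δ j ≠ 0
      simp [hδ]
  · intro z hz
    obtain ⟨hz1, hz2⟩ := Finset.mem_filter.1 hz
    have hle : ∀ i, δ i ≤ z i := by
      intro i
      by_cases h : i = j
      · subst h; simpa [hδ] using Nat.one_le_iff_ne_zero.2 hz2
      · simp [hδ, h]
    have hzz : ∑ i, ((z - δ) i + δ i) = ∑ i, z i :=
      Finset.sum_congr rfl fun i _ => Nat.sub_add_cancel (hle i)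
    rw [Finset.sum_add_distrib, hδsum] at hzz
    have hz3 := mem_vecSet.1 hz1
    refine mem_vecSet.2 ?_
    show ∑ i, (z - δ) i = N
    omega
  · intro w hw
    funext i
    show (w i + δ i) - δ i = w i
    omega
  · intro z hz
    obtain ⟨hz1, hz2⟩ := Finset.mem_filter.1 hz
    funext i
    show (z i - δ i) + δ i = z i
    refine Nat.sub_add_cancel ?_
    by_cases h : i = j
    · subst h; simpa [hδ] using Nat.one_le_iff_ne_zero.2 hz2
    · simp [hδ, h]
  · intro w hw
    -- goal: a j * ∏ i, a i ^ w i / (w i)! = ((w+δ) j : ℝ) * ∏ i, a i ^ (w+δ) i / ((w+δ) i)!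
    rw [Fintype.prod_eq_mul_prod_compl j (fun i => a i ^ w i / (Nat.factorial (w i) : ℝ)),
        Fintype.prod_eq_mul_prod_compl j (fun i => a i ^ (w + δ) i / (Nat.factorial ((w + δ) i) : ℝ))]
    have hne : ∀ i ∈ ({j}ᶜ : Finset (Fin m)),
        a i ^ (w + δ) i / (Nat.factorial ((w + δ) i) : ℝ)
          = a i ^ w i / (Nat.factorial (w i) : ℝ) := by
      intro i hi
      have h : i ≠ j := by simpa using hi
      have h2 : (w + δ) i = w i := by show w i + δ i = w i; simp [hδ, h]
      rw [h2]
    rw [Finset.prod_congr rfl hne]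
    have h3 : (w + δ) j = w j + 1 := by show w j + δ j = w j + 1; simp [hδ]
    rw [h3, Nat.factorial_succ]
    have h4 : (Nat.factorial (w j) : ℝ) ≠ 0 := by positivity
    have h5 : ((w j : ℝ) + 1) ≠ 0 := by positivity
    push_cast
    field_simp
    simp [hδ]
    ring

lemma sum_shift {m n : ℕ} (y : Fin m → ℕ) (hy : ∑ i, y i ≤ n) (f : (Fin m → ℕ) → ℝ)
    (hf : ∀ x, ¬ (∀ j, y j ≤ x j) → f x = 0) :
    ∑ x ∈ vecSet m n, f x = ∑ z ∈ vecSet m (n - ∑ i, y i), f (y + z) := by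
  classical
  have h1 : ∑ x ∈ vecSet m n, f x
      = ∑ x ∈ (vecSet m n).filter (fun x => ∀ j, y j ≤ x j), f x := by
    refine (Finset.sum_subset (Finset.filter_subset _ _) fun x hx hx' => ?_).symm
    refine hf x fun h => hx' (Finset.mem_filter.2 ⟨hx, h⟩)
  rw [h1]
  refine (Finset.sum_nbij' (i := fun z => y + z) (j := fun x => x - y) ?_ ?_ ?_ ?_ ?_).symm
  · intro z hz
    refine Finset.mem_filter.2 ⟨mem_vecSet.2 ?_, fun i => Nat.le_add_right _ _⟩
    have h2 : ∀ i, (y + z) i = y i + z i := fun i => rfl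
    have h3 := mem_vecSet.1 hz
    simp_rw [h2, Finset.sum_add_distrib, h3]
    omega
  · intro x hx
    obtain ⟨hx1, hx2⟩ := Finset.mem_filter.1 hx
    have hzz : ∑ i, ((x - y) i + y i) = ∑ i, x i :=
      Finset.sum_congr rfl fun i _ => Nat.sub_add_cancel (hx2 i)
    rw [Finset.sum_add_distrib] at hzz
    have hx3 := mem_vecSet.1 hx1
    refine mem_vecSet.2 ?_
    show ∑ i, (x - y) i = n - ∑ i, y i
    omega
  · intro z hz
    funext i
    show (y i + z i) - y i = z i
    omega
  · intro x hx
    obtain ⟨hx1, hx2⟩ := Finset.mem_filter.1 hx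
    funext i
    show y i + (x i - y i) = x i
    exact Nat.add_sub_cancel' (hx2 i)
  · intro z hz; rfl

lemma jointP_shift {m n : ℕ} (π q : Fin m → ℝ) (y z : Fin m → ℕ) :
    jointP n π q (y + z) y
      = ((Nat.factorial n : ℝ) * ∏ i, (π i * q i) ^ y i / (Nat.factorial (y i) : ℝ))
          * ∏ i, (π i * (1 - q i)) ^ z i / (Nat.factorial (z i) : ℝ) := by
  have hcond : ∀ j : Fin m, y j ≤ (y + z) j := fun i => Nat.le_add_right _ _
  rw [jointP, if_pos hcond, mult]
  rw [mul_assoc, mul_assoc, ← Finset.prod_mul_distrib, ← Finset.prod_mul_distrib]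
  congr 1
  refine Finset.prod_congr rfl fun i _ => ?_
  have h1 : (y + z) i = y i + z i := rfl
  rw [h1]
  have h2 : y i + z i - y i = z i := by omega
  rw [h2]
  have hc : ((y i + z i).choose (y i) : ℝ) * (Nat.factorial (y i) : ℝ) * (Nat.factorial (z i) : ℝ)
      = (Nat.factorial (y i + z i) : ℝ) := by
    have hcn : (y i + z i).choose (y i) * (y i).factorial * (z i).factorial
        = (y i + z i).factorial := by
      rw [add_comm (y i) (z i), mul_right_comm]
      exact Nat.add_choose_mul_factorial_mul_factorial (z i) (y i)
    exact_mod_cast congrArg (Nat.cast : ℕ → ℝ) hcn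
  have hy0 : (Nat.factorial (y i) : ℝ) ≠ 0 := by positivity
  have hz0 : (Nat.factorial (z i) : ℝ) ≠ 0 := by positivity
  have hyz0 : (Nat.factorial (y i + z i) : ℝ) ≠ 0 := by positivity
  rw [pow_add, mul_pow, mul_pow]
  field_simp
  linear_combination (π i ^ y i * π i ^ z i * q i ^ y i * (1 - q i) ^ z i) * hc

/-- The conditional mean of `x` given `y` equals `y + (n − 1ᵀy)·π∘(1−q)/(1−πᵀq)`. -/
theorem statement2 (m n : ℕ) (hm : 0 < m) (hn : 0 < n)
    (π : Fin m → ℝ) (hπ0 : ∀ i, 0 ≤ π i) (hπ1 : ∑ i, π i = 1)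
    (q : Fin m → ℝ) (hq0 : ∀ i, 0 ≤ q i) (hq1 : ∀ i, q i ≤ 1)
    (hpq : ∑ i, π i * q i < 1)
    (y : Fin m → ℕ) (hy : ∑ i, y i ≤ n) (j : Fin m) :
    ∑ x ∈ vecSet m n, (x j : ℝ) * jointP n π q x y
      = (∑ z ∈ vecSet m n, jointP n π q z y) *
          ((y j : ℝ) + ((n : ℝ) - ∑ i, (y i : ℝ)) *
            (π j * (1 - q j) / (1 - ∑ i, π i * q i))) := by
  classical
  have hf0 : ∀ x, ¬ (∀ i, y i ≤ x i) → jointP n π q x y = 0 := fun x hx => by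
    rw [jointP, if_neg hx]
  set N := n - ∑ i, y i with hN
  have hL : ∑ x ∈ vecSet m n, (x j : ℝ) * jointP n π q x y
      = ∑ z ∈ vecSet m N, ((y j : ℝ) + (z j : ℝ)) * jointP n π q (y + z) y := by
    rw [sum_shift y hy (fun x => (x j : ℝ) * jointP n π q x y)
      (fun x hx => by show (x j : ℝ) * jointP n π q x y = 0; rw [hf0 x hx, mul_zero])]
    refine Finset.sum_congr rfl fun z hz => ?_
    congr 1
    show (((y j + z j : ℕ)) : ℝ) = (y j : ℝ) + (z j : ℝ)
    push_cast
    ring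
  have hR : ∑ z ∈ vecSet m n, jointP n π q z y
      = ∑ z ∈ vecSet m N, jointP n π q (y + z) y :=
    sum_shift y hy _ hf0
  rw [hL, hR]
  simp_rw [jointP_shift π q y]
  set C := (Nat.factorial n : ℝ) * ∏ i, (π i * q i) ^ y i / (Nat.factorial (y i) : ℝ) with hC
  have hA : ∑ i, π i * (1 - q i) = 1 - ∑ i, π i * q i := by
    simp only [mul_sub, mul_one]
    rw [Finset.sum_sub_distrib, hπ1]
  have hAne : (∑ i, π i * (1 - q i)) ≠ 0 := by rw [hA]; linarith
  have e1 : ∑ z ∈ vecSet m N,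
        ((y j : ℝ) + (z j : ℝ)) * (C * ∏ i, (π i * (1 - q i)) ^ z i / (Nat.factorial (z i) : ℝ))
      = C * ((y j : ℝ) * (∑ z ∈ vecSet m N, ∏ i, (π i * (1 - q i)) ^ z i / (Nat.factorial (z i) : ℝ))
           + ∑ z ∈ vecSet m N, (z j : ℝ) * ∏ i, (π i * (1 - q i)) ^ z i / (Nat.factorial (z i) : ℝ)) := by
    rw [mul_add, Finset.mul_sum, Finset.mul_sum, Finset.mul_sum, ← Finset.sum_add_distrib]
    refine Finset.sum_congr rfl fun z hz => by ring
  have e2 : ∑ z ∈ vecSet m N,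
        C * ∏ i, (π i * (1 - q i)) ^ z i / (Nat.factorial (z i) : ℝ)
      = C * ∑ z ∈ vecSet m N, ∏ i, (π i * (1 - q i)) ^ z i / (Nat.factorial (z i) : ℝ) :=
    (Finset.mul_sum _ _ _).symm
  rw [e1, e2]
  have hsC : ∑ z ∈ vecSet m N, ∏ i, (π i * (1 - q i)) ^ z i / (Nat.factorial (z i) : ℝ)
      = (∑ i, π i * (1 - q i)) ^ N / (Nat.factorial N : ℝ) := sumC _ N
  have hsumcast : ∑ i, ((y i : ℝ)) = ((∑ i, y i : ℕ) : ℝ) := by push_cast; rfl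
  rw [hsC, ← hA]
  by_cases hN0 : N = 0
  · have hyn : ∑ i, y i = n := by omega
    have hz0 : ∑ z ∈ vecSet m N, (z j : ℝ) * ∏ i, (π i * (1 - q i)) ^ z i / (Nat.factorial (z i) : ℝ)
        = 0 := by
      refine Finset.sum_eq_zero fun z hz => ?_
      have h1 := mem_vecSet.1 hz
      have h2 : z j ≤ ∑ i, z i := Finset.single_le_sum (fun _ _ => Nat.zero_le _) (Finset.mem_univ j)
      have h3 : z j = 0 := by omega
      rw [h3]
      simp
    have hc0 : (n : ℝ) - ∑ i, (y i : ℝ) = 0 := by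
      rw [hsumcast, hyn]; ring
    rw [hz0, hc0, hN0]
    simp
  · obtain ⟨K, hK⟩ := Nat.exists_eq_succ_of_ne_zero hN0
    have hsD : ∑ z ∈ vecSet m (K + 1), (z j : ℝ) * ∏ i, (π i * (1 - q i)) ^ z i / (Nat.factorial (z i) : ℝ)
        = (π j * (1 - q j)) * ((∑ i, π i * (1 - q i)) ^ K / (Nat.factorial K : ℝ)) := sumD _ K j
    have hcastN : (n : ℝ) - ∑ i, (y i : ℝ) = (K : ℝ) + 1 := by
      have h1 : ∑ i, y i + (K + 1) = n := by omega
      have h2 := congrArg (Nat.cast : ℕ → ℝ) h1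
      push_cast at h2
      rw [hsumcast]
      push_cast
      linarith
    rw [hK, hsD, hcastN, Nat.factorial_succ, pow_succ]
    have hKne : (Nat.factorial K : ℝ) ≠ 0 := by positivity
    have hK1ne : ((K : ℝ) + 1) ≠ 0 := by positivity
    push_cast
    field_simp
end

section
/- Let m, n be positive integers, let P be an m×m matrix with nonnegative entries summing to 1, let π ∈ ℝ^m be its column-sum vector, π^{(i)} = ∑_{k=1}^m P^{(k,i)}, and let K be an m×m row-stochastic matrix. Then for every m×m nonnegative-integer matrix W with ∑_{i,j} W^{(i,j)} = n: ∑_{Z} Mult(n,P)(Z) · M̄(Z, K, W) = n! ∏_{i,j=1}^m (π^{(i)} K^{(i,j)})^{W^{(i,j)}} / W^{(i,j)}!, the sum being over all m×m nonnegative-integer matrices Z with ∑_{i,j} Z^{(i,j)} = n. In words: mixing the kernel M̄(·,K,·) over a Mult(n,P) distribution yields Mult(n, (π ⊗ 1)∘K), where ((π ⊗ 1)∘K)^{(i,j)} = π^{(i)} K^{(i,j)}. -/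
open Finset

/-- The matrix multinomial probability mass function `Mult(n, P)` at a matrix `Z` with
total entry sum `n`. -/
noncomputable def matMult {m : ℕ} (n : ℕ) (P : Fin m → Fin m → ℝ)
    (Z : Fin m → Fin m → ℕ) : ℝ :=
  (Nat.factorial n : ℝ) * ∏ i, ∏ j, P i j ^ Z i j / (Nat.factorial (Z i j) : ℝ)

/-- The (finite) set of `m×m` matrices with nonnegative integer entries and total sum `n`. -/
def matSet (m n : ℕ) : Finset (Fin m → Fin m → ℕ) :=
  (Fintype.piFinset fun _ : Fin m => Fintype.piFinset fun _ : Fin m =>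
      Finset.range (n + 1)).filter fun Z => ∑ i, ∑ j, Z i j = n

/-- `M̄(Z, K, W)`: the transition kernel for the transition-count matrices.  It is zero
unless the row sums of `W` match the column sums of `Z`, in which case, given the row
sums, the rows of `W` are independent with row `i` distributed `Mult((W·1)⁽ⁱ⁾, K⁽ⁱ'⁾)`. -/
noncomputable def Mbar {m : ℕ} (Z : Fin m → Fin m → ℕ) (K : Fin m → Fin m → ℝ)
    (W : Fin m → Fin m → ℕ) : ℝ :=
  if ∀ i, ∑ j, W i j = ∑ k, Z k i then
    ∏ i, (Nat.factorial (∑ j, W i j) : ℝ) *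
      ∏ j, K i j ^ W i j / (Nat.factorial (W i j) : ℝ)
  else 0

lemma col_sum {m : ℕ} (c : ℕ) (x : Fin m → ℝ) :
    ∑ v ∈ Finset.piAntidiag (univ : Finset (Fin m)) c,
        ∏ k, x k ^ v k / (Nat.factorial (v k) : ℝ)
      = (∑ k, x k) ^ c / (Nat.factorial c : ℝ) := by
  rw [show ((∑ k, x k) ^ c) = ∑ v ∈ Finset.piAntidiag (univ : Finset (Fin m)) c,
      (Nat.multinomial univ v : ℝ) * ∏ k, x k ^ v k from sum_pow_eq_sum_piAntidiag _ _ _,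
    Finset.sum_div]
  refine Finset.sum_congr rfl fun v hv => ?_
  have hsum : ∑ k, v k = c := (Finset.mem_piAntidiag.1 hv).1
  have hspec := Nat.multinomial_spec (univ : Finset (Fin m)) v
  rw [hsum] at hspec
  have h1 : (0:ℝ) < ∏ k, (Nat.factorial (v k) : ℝ) :=
    Finset.prod_pos fun k _ => by positivity
  have h2 : (Nat.multinomial univ v : ℝ) = (Nat.factorial c : ℝ) / ∏ k, (Nat.factorial (v k) : ℝ) := by
    rw [eq_div_iff h1.ne', ← Nat.cast_prod, ← Nat.cast_mul, mul_comm, hspec]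
  rw [h2, Finset.prod_div_distrib]
  have hc : (0:ℝ) < (Nat.factorial c : ℝ) := by positivity
  field_simp

set_option maxHeartbeats 1000000 in
/-- Mixing the kernel `M̄(·, K, ·)` over a `Mult(n, P)` distribution yields
`Mult(n, (π ⊗ 1)∘K)` where `π` is the column-sum vector of `P`. -/
theorem statement4 (m n : ℕ) (hm : 0 < m) (hn : 0 < n)
    (P : Fin m → Fin m → ℝ) (hP0 : ∀ i j, 0 ≤ P i j) (hP1 : ∑ i, ∑ j, P i j = 1)
    (K : Fin m → Fin m → ℝ) (hK0 : ∀ i j, 0 ≤ K i j) (hK1 : ∀ i, ∑ j, K i j = 1)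
    (W : Fin m → Fin m → ℕ) (hW : ∑ i, ∑ j, W i j = n) :
    ∑ Z ∈ matSet m n, matMult n P Z * Mbar Z K W
      = (Nat.factorial n : ℝ) *
          ∏ i, ∏ j, ((∑ k, P k i) * K i j) ^ W i j / (Nat.factorial (W i j) : ℝ) := by
  classical
  set C : ℝ := ∏ i, (Nat.factorial (∑ j, W i j) : ℝ) *
      ∏ j, K i j ^ W i j / (Nat.factorial (W i j) : ℝ) with hC
  -- Step 1: restrict the sum
  have step1 : ∑ Z ∈ matSet m n, matMult n P Z * Mbar Z K W
      = ∑ Z ∈ (matSet m n).filter (fun Z => ∀ i, ∑ j, W i j = ∑ k, Z k i),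
          matMult n P Z * C := by
    rw [Finset.sum_filter]
    refine Finset.sum_congr rfl fun Z _ => ?_
    by_cases h : ∀ i, ∑ j, W i j = ∑ k, Z k i
    · simp [Mbar, h, hC]
    · simp [Mbar, h]
  rw [step1, ← Finset.sum_mul]
  -- Step 2: bijection with products of column antidiagonals
  have step2 : ∑ Z ∈ (matSet m n).filter (fun Z => ∀ i, ∑ j, W i j = ∑ k, Z k i),
        matMult n P Z
      = ∑ g ∈ Fintype.piFinset (fun j : Fin m =>
          Finset.piAntidiag (univ : Finset (Fin m)) (∑ l, W j l)),
          (Nat.factorial n : ℝ) * ∏ j, ∏ k, P k j ^ g j k / (Nat.factorial (g j k) : ℝ) := by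
    refine Finset.sum_nbij' (fun Z => fun j k => Z k j) (fun g => fun k j => g j k)
      ?_ ?_ ?_ ?_ ?_
    · intro Z hZ
      rw [Finset.mem_filter] at hZ
      rw [Fintype.mem_piFinset]
      intro j
      rw [Finset.mem_piAntidiag]
      exact ⟨(hZ.2 j).symm, fun _ _ => Finset.mem_univ _⟩
    · intro g hg
      rw [Fintype.mem_piFinset] at hg
      have hcol : ∀ j, ∑ k, g j k = ∑ l, W j l := fun j =>
        (Finset.mem_piAntidiag.1 (hg j)).1
      have htot : ∑ k, ∑ j, g j k = n := by
        rw [Finset.sum_comm]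
        rw [show ∑ j, ∑ k, g j k = ∑ j, ∑ l, W j l from
          Finset.sum_congr rfl fun j _ => hcol j, hW]
      refine Finset.mem_filter.2 ⟨Finset.mem_filter.2 ⟨?_, htot⟩, fun i => (hcol i).symm⟩
      rw [Fintype.mem_piFinset]
      intro k
      rw [Fintype.mem_piFinset]
      intro j
      rw [Finset.mem_range, Nat.lt_succ_iff]
      calc g j k ≤ ∑ j', g j' k := Finset.single_le_sum (f := fun j' => g j' k)
            (fun _ _ => Nat.zero_le _) (Finset.mem_univ j)
        _ ≤ ∑ k', ∑ j', g j' k' :=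
            Finset.single_le_sum (f := fun k' => ∑ j', g j' k')
              (fun _ _ => Nat.zero_le _) (Finset.mem_univ k)
        _ = n := htot
    · intro Z _; rfl
    · intro g _; rfl
    · intro Z _
      rw [matMult, Finset.prod_comm]
  rw [step2, ← Finset.mul_sum]
  have hps : ∑ g ∈ Fintype.piFinset (fun j : Fin m =>
        Finset.piAntidiag (univ : Finset (Fin m)) (∑ l, W j l)),
      ∏ j, ∏ k, P k j ^ g j k / (Nat.factorial (g j k) : ℝ)
    = ∏ j, ∑ v ∈ Finset.piAntidiag (univ : Finset (Fin m)) (∑ l, W j l),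
        ∏ k, P k j ^ v k / (Nat.factorial (v k) : ℝ) :=
    (Finset.prod_univ_sum (fun j => Finset.piAntidiag (univ : Finset (Fin m)) (∑ l, W j l))
      (fun j v => ∏ k, P k j ^ v k / (Nat.factorial (v k) : ℝ))).symm
  rw [hps]
  have step3 : ∀ j : Fin m,
      ∑ v ∈ Finset.piAntidiag (univ : Finset (Fin m)) (∑ l, W j l),
        ∏ k, P k j ^ v k / (Nat.factorial (v k) : ℝ)
      = (∑ k, P k j) ^ (∑ l, W j l) / (Nat.factorial (∑ l, W j l) : ℝ) :=
    fun j => col_sum _ _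
  rw [Finset.prod_congr rfl fun j _ => step3 j, hC, mul_assoc, ← Finset.prod_mul_distrib]
  congr 1
  refine Finset.prod_congr rfl fun i _ => ?_
  have hf : (0:ℝ) < (Nat.factorial (∑ l, W i l) : ℝ) := by positivity
  rw [show ((∑ k, P k i) ^ (∑ l, W i l)) / (Nat.factorial (∑ l, W i l):ℝ) *
      ((Nat.factorial (∑ j, W i j):ℝ) * ∏ j, K i j ^ W i j / (Nat.factorial (W i j):ℝ))
    = (∑ k, P k i) ^ (∑ l, W i l) * ∏ j, K i j ^ W i j / (Nat.factorial (W i j):ℝ) by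
      field_simp]
  rw [← Finset.prod_pow_eq_pow_sum, ← Finset.prod_mul_distrib]
  exact Finset.prod_congr rfl fun j _ => by rw [mul_pow, mul_div_assoc]
end

section
/- Let m, n be positive integers, let P be an m×m matrix with nonnegative entries summing to 1, and let Q be an m×m matrix with entries in [0,1] such that ∑_{i,j} P^{(i,j)} Q^{(i,j)} < 1. Define the joint probability mass function p(Z,Y) = Mult(n,P)(Z) · ∏_{i,j=1}^m C(Z^{(i,j)}, Y^{(i,j)}) (Q^{(i,j)})^{Y^{(i,j)}} (1−Q^{(i,j)})^{Z^{(i,j)}−Y^{(i,j)}} for m×m nonnegative-integer matrices Z with total sum n and Y with Y ≤ Z entrywise (and 0 otherwise), and let p(Y) = ∑_Z p(Z,Y). Then for every Y with p(Y) > 0 and every Z with total sum n: if Y ≤ Z entrywise, p(Z,Y)/p(Y) = Mult(n − ∑_{i,j} Y^{(i,j)}, P̃)(Z − Y), where P̃^{(i,j)} = P^{(i,j)}(1−Q^{(i,j)}) / (1 − ∑_{k,l} P^{(k,l)} Q^{(k,l)}), and p(Z,Y)/p(Y) = 0 otherwise. That is, the conditional distribution of Z given Y is that of Y + Z* with Z*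 ∼ Mult(n − 1ᵀY1, P∘(1−Q)/(1 − 1ᵀ(P∘Q)1)). -/
open Finset

/-- The joint probability mass function `p(Z, Y)`: `Z ∼ Mult(n, P)` and, given `Z`, the
entries of `Y` are conditionally independent with `Y⁽ⁱʲ⁾ ∼ Bin(Z⁽ⁱʲ⁾, Q⁽ⁱʲ⁾)`. -/
noncomputable def jointPM {m : ℕ} (n : ℕ) (P Q : Fin m → Fin m → ℝ)
    (Z Y : Fin m → Fin m → ℕ) : ℝ :=
  if ∀ i j, Y i j ≤ Z i j then
    matMult n P Z *
      ∏ i, ∏ j, ((Z i j).choose (Y i j) : ℝ) * Q i j ^ Y i j *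
        (1 - Q i j) ^ (Z i j - Y i j)
  else 0

lemma mem_matSet' {m t : ℕ} {V : Fin m → Fin m → ℕ} :
    V ∈ matSet m t ↔ ∑ i, ∑ j, V i j = t := by
  unfold matSet
  simp only [mem_filter, Fintype.mem_piFinset, mem_range, and_iff_right_iff_imp]
  intro h i j
  have h1 : V i j ≤ ∑ j, V i j :=
    Finset.single_le_sum (fun _ _ => Nat.zero_le _) (mem_univ j)
  have h2 : (∑ j, V i j) ≤ ∑ i, ∑ j, V i j :=
    Finset.single_le_sum (f := fun i => ∑ j, V i j) (fun _ _ => Nat.zero_le _) (mem_univ i)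
  omega

lemma sum_sub_add' {m : ℕ} (W Y : Fin m → Fin m → ℕ) (h : ∀ i j, Y i j ≤ W i j) :
    (∑ i, ∑ j, (W i j - Y i j)) + ∑ i, ∑ j, Y i j = ∑ i, ∑ j, W i j := by
  rw [← Finset.sum_add_distrib]
  refine Finset.sum_congr rfl fun i _ => ?_
  rw [← Finset.sum_add_distrib]
  refine Finset.sum_congr rfl fun j _ => ?_
  have := h i j
  omega

lemma matSum' {m : ℕ} (x : Fin m → Fin m → ℝ) (t : ℕ) :
    (Nat.factorial t : ℝ) *
      ∑ V ∈ matSet m t, ∏ i, ∏ j, x i j ^ V i j / (Nat.factorial (V i j) : ℝ)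
      = (∑ i, ∑ j, x i j) ^ t := by
  have hx : (∑ i, ∑ j, x i j) = ∑ p ∈ (univ : Finset (Fin m × Fin m)), x p.1 p.2 := by
    rw [Fintype.sum_prod_type]
  rw [hx, Finset.sum_pow_eq_sum_piAntidiag, Finset.mul_sum]
  refine Finset.sum_nbij' (i := fun V (p : Fin m × Fin m) => V p.1 p.2)
    (j := fun k => fun i j => k (i, j)) ?_ ?_ ?_ ?_ ?_
  · intro V hV
    rw [Finset.mem_piAntidiag]
    refine ⟨?_, fun _ _ => mem_univ _⟩
    rw [Fintype.sum_prod_type]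
    exact mem_matSet'.1 hV
  · intro k hk
    rw [Finset.mem_piAntidiag] at hk
    rw [mem_matSet', ← Fintype.sum_prod_type]
    exact hk.1
  · intro V _; rfl
  · intro k _; rfl
  · intro V hV
    have hsum : ∑ p ∈ (univ : Finset (Fin m × Fin m)), V p.1 p.2 = t := by
      rw [Fintype.sum_prod_type]; exact mem_matSet'.1 hV
    have hmul : (Nat.multinomial (univ : Finset (Fin m × Fin m)) (fun p => V p.1 p.2) : ℝ)
        * ∏ p : Fin m × Fin m, (Nat.factorial (V p.1 p.2) : ℝ) = (Nat.factorial t : ℝ) := by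
      rw [← Nat.cast_prod, ← Nat.cast_mul, mul_comm, Nat.multinomial_spec, hsum]
    have hfac : ∏ p : Fin m × Fin m, (Nat.factorial (V p.1 p.2) : ℝ) ≠ 0 :=
      Finset.prod_ne_zero_iff.2 fun p _ => Nat.cast_ne_zero.2 (Nat.factorial_ne_zero _)
    rw [← hmul]
    rw [← Fintype.prod_prod_type (f := fun p : Fin m × Fin m => x p.1 p.2 ^ V p.1 p.2 / (Nat.factorial (V p.1 p.2) : ℝ))]
    rw [Finset.prod_div_distrib]
    field_simp

lemma entry_eq' (p q : ℝ) {a b : ℕ} (h : b ≤ a) :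
    p ^ a / (Nat.factorial a : ℝ) *
        ((a.choose b : ℝ) * q ^ b * (1 - q) ^ (a - b))
      = (p * q) ^ b / (Nat.factorial b : ℝ) *
        ((p * (1 - q)) ^ (a - b) / (Nat.factorial (a - b) : ℝ)) := by
  have hp : p ^ a = p ^ b * p ^ (a - b) := by
    rw [← pow_add]; congr 1; omega
  rw [Nat.cast_choose ℝ h, hp, mul_pow, mul_pow]
  have h1 : (Nat.factorial b : ℝ) ≠ 0 := Nat.cast_ne_zero.2 (Nat.factorial_ne_zero _)
  have h2 : (Nat.factorial (a - b) : ℝ) ≠ 0 := Nat.cast_ne_zero.2 (Nat.factorial_ne_zero _)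
  have h3 : (Nat.factorial a : ℝ) ≠ 0 := Nat.cast_ne_zero.2 (Nat.factorial_ne_zero _)
  field_simp

lemma jointPM_eq' {m : ℕ} (n : ℕ) (P Q : Fin m → Fin m → ℝ) (Z Y : Fin m → Fin m → ℕ)
    (hle : ∀ i j, Y i j ≤ Z i j) :
    jointPM n P Q Z Y = (Nat.factorial n : ℝ) *
      ((∏ i, ∏ j, (P i j * Q i j) ^ Y i j / (Nat.factorial (Y i j) : ℝ)) *
       (∏ i, ∏ j, (P i j * (1 - Q i j)) ^ (Z i j - Y i j) /
          (Nat.factorial (Z i j - Y i j) : ℝ))) := by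
  rw [jointPM, if_pos hle, matMult, mul_assoc]
  congr 1
  rw [← Finset.prod_mul_distrib, ← Finset.prod_mul_distrib]
  refine Finset.prod_congr rfl fun i _ => ?_
  rw [← Finset.prod_mul_distrib, ← Finset.prod_mul_distrib]
  refine Finset.prod_congr rfl fun j _ => ?_
  exact entry_eq' _ _ (hle i j)

lemma sum_jointPM' {m n : ℕ} (P Q : Fin m → Fin m → ℝ) (Y : Fin m → Fin m → ℕ)
    (hs : ∑ i, ∑ j, Y i j ≤ n) :
    ∑ W ∈ matSet m n, jointPM n P Q W Y
      = (Nat.factorial n : ℝ) *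
        (∏ i, ∏ j, (P i j * Q i j) ^ Y i j / (Nat.factorial (Y i j) : ℝ))
        * ((∑ i, ∑ j, P i j * (1 - Q i j)) ^ (n - ∑ i, ∑ j, Y i j)
            / (Nat.factorial (n - ∑ i, ∑ j, Y i j) : ℝ)) := by
  classical
  set s := ∑ i, ∑ j, Y i j with hsdef
  have hfilt : ∑ W ∈ (matSet m n).filter (fun W => ∀ i j, Y i j ≤ W i j),
      jointPM n P Q W Y = ∑ W ∈ matSet m n, jointPM n P Q W Y := by
    refine Finset.sum_filter_of_ne fun W _ hne => ?_
    by_contra hc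
    exact hne (by rw [jointPM, if_neg hc])
  rw [← hfilt]
  have key : ∑ W ∈ (matSet m n).filter (fun W => ∀ i j, Y i j ≤ W i j), jointPM n P Q W Y
      = ∑ V ∈ matSet m (n - s), (Nat.factorial n : ℝ) *
          ((∏ i, ∏ j, (P i j * Q i j) ^ Y i j / (Nat.factorial (Y i j) : ℝ)) *
           (∏ i, ∏ j, (P i j * (1 - Q i j)) ^ V i j / (Nat.factorial (V i j) : ℝ))) := by
    refine Finset.sum_nbij' (i := fun W => fun i j => W i j - Y i j)
      (j := fun V => fun i j => Y i j + V i j) ?_ ?_ ?_ ?_ ?_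
    · intro W hW
      rw [Finset.mem_filter] at hW
      have h1 := mem_matSet'.1 hW.1
      have h2 := sum_sub_add' W Y hW.2
      simp only [mem_matSet']
      omega
    · intro V hV
      have h1 := mem_matSet'.1 hV
      simp only [Finset.mem_filter, mem_matSet']
      refine ⟨?_, fun i j => Nat.le_add_right _ _⟩
      have h2 : ∑ i, ∑ j, (Y i j + V i j) = (∑ i, ∑ j, Y i j) + ∑ i, ∑ j, V i j := by
        simp [Finset.sum_add_distrib]
      simpa [h2, h1] using Nat.add_sub_cancel' hs
    · intro W hW
      rw [Finset.mem_filter] at hW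
      funext i j
      exact Nat.add_sub_cancel' (hW.2 i j)
    · intro V _
      funext i j
      simp
    · intro W hW
      rw [Finset.mem_filter] at hW
      exact jointPM_eq' n P Q W Y hW.2
  rw [key, ← Finset.mul_sum, ← Finset.mul_sum, ← mul_assoc]
  congr 1
  have hM := matSum' (fun i j => P i j * (1 - Q i j)) (n - s)
  have hfac : (Nat.factorial (n - s) : ℝ) ≠ 0 := Nat.cast_ne_zero.2 (Nat.factorial_ne_zero _)
  rw [eq_div_iff hfac, mul_comm]
  exact hM


/-- The conditional distribution of `Z` given `Y` is that of `Y + Z*` with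
`Z* ∼ Mult(n − 1ᵀY1, P∘(1−Q)/(1 − 1ᵀ(P∘Q)1))`. -/
theorem statement5 (m n : ℕ) (hm : 0 < m) (hn : 0 < n)
    (P : Fin m → Fin m → ℝ) (hP0 : ∀ i j, 0 ≤ P i j) (hP1 : ∑ i, ∑ j, P i j = 1)
    (Q : Fin m → Fin m → ℝ) (hQ0 : ∀ i j, 0 ≤ Q i j) (hQ1 : ∀ i j, Q i j ≤ 1)
    (hPQ : ∑ i, ∑ j, P i j * Q i j < 1)
    (Y : Fin m → Fin m → ℕ) (hY : 0 < ∑ Z ∈ matSet m n, jointPM n P Q Z Y)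
    (Z : Fin m → Fin m → ℕ) (hZ : ∑ i, ∑ j, Z i j = n) :
    ((∀ i j, Y i j ≤ Z i j) →
      jointPM n P Q Z Y / (∑ W ∈ matSet m n, jointPM n P Q W Y)
        = matMult (n - ∑ i, ∑ j, Y i j)
            (fun i j => P i j * (1 - Q i j) / (1 - ∑ k, ∑ l, P k l * Q k l))
            (fun i j => Z i j - Y i j)) ∧
    ((¬ ∀ i j, Y i j ≤ Z i j) →
      jointPM n P Q Z Y / (∑ W ∈ matSet m n, jointPM n P Q W Y) = 0) := by
  constructor
  · intro hle
    set s := ∑ i, ∑ j, Y i j with hsdef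
    have hsn : s ≤ n := by
      by_contra hcon
      push_neg at hcon
      have hz : ∑ W ∈ matSet m n, jointPM n P Q W Y = 0 := by
        refine Finset.sum_eq_zero fun W hW => ?_
        rw [jointPM, if_neg]
        intro hle'
        have h1 : s ≤ ∑ i, ∑ j, W i j :=
          Finset.sum_le_sum fun i _ => Finset.sum_le_sum fun j _ => hle' i j
        rw [mem_matSet'.1 hW] at h1
        omega
      rw [hz] at hY
      exact lt_irrefl 0 hY
    have hc' : ∑ i, ∑ j, P i j * (1 - Q i j) = 1 - ∑ i, ∑ j, P i j * Q i j := by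
      have h : ∀ i, ∑ j, P i j * (1 - Q i j) = ∑ j, P i j - ∑ j, P i j * Q i j := by
        intro i
        rw [← Finset.sum_sub_distrib]
        exact Finset.sum_congr rfl fun j _ => by ring
      simp_rw [h]
      rw [Finset.sum_sub_distrib, hP1]
    set c := 1 - ∑ k, ∑ l, P k l * Q k l with hcdef
    have hcpos : 0 < c := by rw [hcdef]; linarith
    have hcne : c ≠ 0 := ne_of_gt hcpos
    have hD := sum_jointPM' P Q Y hsn
    rw [hc'] at hD
    set K := ∏ i, ∏ j, (P i j * Q i j) ^ Y i j / (Nat.factorial (Y i j) : ℝ) with hKdef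
    have hnum := jointPM_eq' n P Q Z Y hle
    have hKne : K ≠ 0 := by
      intro h0
      rw [hD, h0] at hY
      simp at hY
    have hsumZY : ∑ i, ∑ j, (Z i j - Y i j) = n - s := by
      have := sum_sub_add' Z Y hle
      omega
    have hmm : matMult (n - s) (fun i j => P i j * (1 - Q i j) / c)
          (fun i j => Z i j - Y i j)
        = (Nat.factorial (n - s) : ℝ) *
          ((∏ i, ∏ j, (P i j * (1 - Q i j)) ^ (Z i j - Y i j) /
              (Nat.factorial (Z i j - Y i j) : ℝ)) / c ^ (n - s)) := by
      rw [matMult]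
      congr 1
      have hsplit : ∀ i j : Fin m,
          (P i j * (1 - Q i j) / c) ^ (Z i j - Y i j) /
              (Nat.factorial (Z i j - Y i j) : ℝ)
          = ((P i j * (1 - Q i j)) ^ (Z i j - Y i j) /
              (Nat.factorial (Z i j - Y i j) : ℝ)) * (1 / c) ^ (Z i j - Y i j) := by
        intro i j
        rw [div_pow, div_pow, one_pow]
        ring
      simp_rw [hsplit, Finset.prod_mul_distrib, Finset.prod_pow_eq_pow_sum, hsumZY]
      rw [div_pow, one_pow]
      ring
    rw [← hsdef] at hD
    rw [← hKdef] at hnum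
    obtain ⟨T, hT⟩ : ∃ T, (∏ i, ∏ j, (P i j * (1 - Q i j)) ^ (Z i j - Y i j) /
        (Nat.factorial (Z i j - Y i j) : ℝ)) = T := ⟨_, rfl⟩
    rw [hT] at hnum hmm
    rw [hnum, hD, hmm]
    have hfn : (Nat.factorial n : ℝ) ≠ 0 := Nat.cast_ne_zero.2 (Nat.factorial_ne_zero _)
    have hfs : (Nat.factorial (n - s) : ℝ) ≠ 0 := Nat.cast_ne_zero.2 (Nat.factorial_ne_zero _)
    have hcp : (c : ℝ) ^ (n - s) ≠ 0 := pow_ne_zero _ hcne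
    field_simp
  · intro h
    rw [jointPM, if_neg h, zero_div]
end

section
/- Let m, n, t be positive integers. For s = 0,…,t let π_{s|s} ∈ ℝ^m be probability vectors, and for s = 1,…,t let K_s be m×m row-stochastic matrices such that (K_{s+1}ᵀ π_{s|s})^{(i)} > 0 for all i and all 0 ≤ s < t. For 0 ≤ s < t define the backward kernel B_s(x', x) = Mult(n, π_{s|s})(x) · M(x, K_{s+1}, x') / Mult(n, K_{s+1}ᵀ π_{s|s})(x') for x, x' ∈ S_{m,n} with Mult(n, K_{s+1}ᵀ π_{s|s})(x') > 0, and define the row-stochastic matrices L_s by L_s^{(i,j)} = π_{s|s}^{(j)} K_{s+1}^{(j,i)} / (K_{s+1}ᵀ π_{s|s})^{(i)}. Define probability mass functions on S_{m,n} recursively by μ_{t|t} = Mult(n, π_{t|t}) and μ_{s|t}(x) = ∑_{x' ∈ S_{m,n}} μ_{s+1|t}(x') B_s(x', x), and define vectors recursively by π_{t|t} and π_{s|t} = L_sᵀ π_{s+1|t}. Then for every 0 ≤ s ≤ t, μ_{s|t} is the probability mass function of Mult(n, π_{s|t}). -/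
open Finset

lemma vecSet_eq (m n : ℕ) : vecSet m n = Finset.piAntidiag (univ : Finset (Fin m)) n := by
  ext x
  simp only [vecSet, mem_filter, Fintype.mem_piFinset, mem_range, mem_piAntidiag, mem_univ,
    implies_true, and_true]
  constructor
  · rintro ⟨-, h⟩; exact h
  · intro h
    refine ⟨fun i => ?_, h⟩
    have hle := Finset.single_le_sum (f := x) (fun i _ => Nat.zero_le _) (mem_univ i)
    rw [h] at hle
    omega

lemma rowSum {m : ℕ} (c : ℕ) (g : Fin m → ℝ) :
    ∑ z ∈ Finset.piAntidiag (univ : Finset (Fin m)) c,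
      (Nat.factorial c : ℝ) * ∏ j, g j ^ z j / (Nat.factorial (z j) : ℝ)
      = (∑ j, g j) ^ c := by
  rw [Finset.sum_pow_eq_sum_piAntidiag]
  refine Finset.sum_congr rfl fun z hz => ?_
  simp only [mem_piAntidiag, mem_univ] at hz
  have hspec := Nat.multinomial_spec (univ : Finset (Fin m)) z
  rw [hz.1] at hspec
  have h1 : (Nat.factorial c : ℝ) = (∏ j, (Nat.factorial (z j) : ℝ)) *
      (Nat.multinomial (univ : Finset (Fin m)) z : ℝ) := by
    rw [← Nat.cast_prod, ← Nat.cast_mul, hspec]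
  rw [h1]
  rw [Finset.prod_div_distrib]
  have hne : (∏ j, (Nat.factorial (z j) : ℝ)) ≠ 0 :=
    Finset.prod_ne_zero_iff.2 fun j _ => Nat.cast_ne_zero.2 (Nat.factorial_ne_zero _)
  field_simp

lemma key {m : ℕ} (n : ℕ) (x : Fin m → ℕ) (hx : ∑ i, x i = n)
    (g : Fin m → Fin m → ℝ) (r : Fin m → ℝ) :
    ∑ y ∈ vecSet m n, (∏ j, r j ^ y j) * kerM g x y
      = ∏ i, (∑ j, g i j * r j) ^ x i := by
  classical
  set F : (Fin m → Fin m → ℕ) → ℝ := fun Z => ∏ i,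
    (Nat.factorial (x i) : ℝ) * ∏ j, (g i j * r j) ^ Z i j / (Nat.factorial (Z i j) : ℝ)
    with hF
  set rowSet : Finset (Fin m → Fin m → ℕ) :=
    (Fintype.piFinset fun _ : Fin m => Fintype.piFinset fun _ : Fin m =>
      Finset.range (∑ i, x i + 1)).filter (fun Z => ∀ i, ∑ j, Z i j = x i) with hrowSet
  have hterm : ∀ y ∈ vecSet m n,
      (∏ j, r j ^ y j) * kerM g x y = ∑ Z ∈ transSet x y, F Z := by
    intro y hy
    rw [kerM, mul_sum]
    refine Finset.sum_congr rfl fun Z hZ => ?_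
    simp only [transSet, mem_filter] at hZ
    obtain ⟨-, hrow, hcol⟩ := hZ
    have h1 : ∏ j, r j ^ y j = ∏ i, ∏ j, r j ^ Z i j := by
      rw [Finset.prod_comm]
      refine Finset.prod_congr rfl fun j _ => ?_
      rw [← hcol j, ← Finset.prod_pow_eq_pow_sum]
    rw [h1, ← Finset.prod_mul_distrib]
    refine Finset.prod_congr rfl fun i _ => ?_
    rw [mul_left_comm]
    congr 1
    rw [← Finset.prod_mul_distrib]
    refine Finset.prod_congr rfl fun j _ => ?_
    rw [mul_pow]; ring
  rw [Finset.sum_congr rfl hterm]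
  have htrans : ∀ y : Fin m → ℕ, transSet x y
      = rowSet.filter (fun Z => (fun j => ∑ i, Z i j) = y) := by
    intro y
    rw [hrowSet, Finset.filter_filter, transSet]
    refine Finset.filter_congr fun Z _ => ?_
    simp [funext_iff]
  simp_rw [htrans]
  have hmaps : ∀ Z ∈ rowSet, (fun j => ∑ i, Z i j) ∈ vecSet m n := by
    intro Z hZ
    simp only [hrowSet, mem_filter, Fintype.mem_piFinset, mem_range] at hZ
    obtain ⟨-, hrow⟩ := hZ
    have hsum : ∑ j, ∑ i, Z i j = n := by
      rw [Finset.sum_comm]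
      simp only [hrow]
      exact hx
    simp only [vecSet, mem_filter, Fintype.mem_piFinset, mem_range]
    refine ⟨fun j => ?_, hsum⟩
    have hb : ∑ i, Z i j ≤ ∑ j, ∑ i, Z i j := Finset.single_le_sum (f := fun j => ∑ i, Z i j)
      (fun j _ => Nat.zero_le _) (mem_univ j)
    rw [hsum] at hb
    omega
  rw [Finset.sum_fiberwise_of_maps_to hmaps F]
  have hrowEq : rowSet = Fintype.piFinset
      (fun i => Finset.piAntidiag (univ : Finset (Fin m)) (x i)) := by
    ext Z
    simp only [hrowSet, mem_filter, Fintype.mem_piFinset, mem_range, mem_piAntidiag,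
      mem_univ, implies_true, and_true]
    constructor
    · rintro ⟨-, h⟩; exact h
    · intro h
      refine ⟨fun i j => ?_, h⟩
      have h1 := Finset.single_le_sum (f := Z i) (fun j _ => Nat.zero_le _) (mem_univ j)
      have h2 := Finset.single_le_sum (f := x) (fun i _ => Nat.zero_le _) (mem_univ i)
      rw [h i] at h1
      omega
  rw [hrowEq]
  refine Eq.trans ?_ (Finset.prod_congr rfl fun i _ => rowSum (x i) (fun j => g i j * r j))
  exact (Finset.prod_univ_sum (fun i => Finset.piAntidiag (univ : Finset (Fin m)) (x i))
    (fun i z => (Nat.factorial (x i) : ℝ) * ∏ j, (g i j * r j) ^ z j /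
      (Nat.factorial (z j) : ℝ))).symm

lemma mult_ne_zero {m : ℕ} (n : ℕ) (q : Fin m → ℝ) (hq : ∀ i, q i ≠ 0) (x : Fin m → ℕ) :
    mult n q x ≠ 0 := by
  unfold mult
  refine mul_ne_zero (Nat.cast_ne_zero.2 (Nat.factorial_ne_zero n)) ?_
  exact Finset.prod_ne_zero_iff.2 fun i _ => div_ne_zero (pow_ne_zero _ (hq i))
    (Nat.cast_ne_zero.2 (Nat.factorial_ne_zero _))

lemma mult_ratio {m : ℕ} (n : ℕ) (p q : Fin m → ℝ) (hq : ∀ i, q i ≠ 0) (x : Fin m → ℕ) :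
    mult n p x = (∏ j, (p j / q j) ^ x j) * mult n q x := by
  unfold mult
  rw [mul_left_comm]
  congr 1
  rw [← Finset.prod_mul_distrib]
  refine Finset.prod_congr rfl fun j _ => ?_
  have h := pow_ne_zero (x j) (hq j)
  field_simp
  rw [div_pow, div_mul_cancel₀ _ h]

lemma mult_mul {m : ℕ} (n : ℕ) (p S : Fin m → ℝ) (x : Fin m → ℕ) :
    mult n (fun i => p i * S i) x = mult n p x * ∏ i, S i ^ x i := by
  unfold mult
  rw [mul_assoc, ← Finset.prod_mul_distrib]
  congr 1
  refine Finset.prod_congr rfl fun i _ => ?_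
  rw [mul_pow]; ring

/-- The multinomial backward smoothing recursion: if `μ_{t|t} = Mult(n, π_{t|t})` and
`μ_{s|t}(x) = ∑_{x'} μ_{s+1|t}(x') B_s(x', x)` with backward kernel
`B_s(x', x) = Mult(n, π_{s|s})(x)·M(x, K_{s+1}, x') / Mult(n, K_{s+1}ᵀπ_{s|s})(x')`,
and `π_{s|t} = L_sᵀ π_{s+1|t}` with `L_s⁽ⁱʲ⁾ = π_{s|s}⁽ʲ⁾K_{s+1}⁽ʲⁱ⁾/(K_{s+1}ᵀπ_{s|s})⁽ⁱ⁾`,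
then `μ_{s|t}` is the pmf of `Mult(n, π_{s|t})` for every `0 ≤ s ≤ t`. -/
theorem statement9 (m n t : ℕ) (hm : 0 < m) (hn : 0 < n) (ht : 0 < t)
    (pf : ℕ → Fin m → ℝ)
    (hpf0 : ∀ s ≤ t, ∀ i, 0 ≤ pf s i) (hpf1 : ∀ s ≤ t, ∑ i, pf s i = 1)
    (K : ℕ → Fin m → Fin m → ℝ)
    (hK0 : ∀ s, 1 ≤ s → s ≤ t → ∀ i j, 0 ≤ K s i j)
    (hK1 : ∀ s, 1 ≤ s → s ≤ t → ∀ i, ∑ j, K s i j = 1)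
    (hpos : ∀ s < t, ∀ i, 0 < ∑ j, pf s j * K (s + 1) j i)
    (μ : ℕ → (Fin m → ℕ) → ℝ)
    (hμt : ∀ x, μ t x = mult n (pf t) x)
    (hμ : ∀ s < t, ∀ x : Fin m → ℕ,
      μ s x = ∑ x' ∈ vecSet m n, μ (s + 1) x' *
        (mult n (pf s) x * kerM (K (s + 1)) x x' /
          mult n (fun i => ∑ j, pf s j * K (s + 1) j i) x'))
    (πs : ℕ → Fin m → ℝ)
    (hπt : πs t = pf t)
    (hπ : ∀ s < t, ∀ j, πs s j =
      ∑ i, (pf s j * K (s + 1) j i / (∑ k, pf s k * K (s + 1) k i)) * πs (s + 1) i) :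
    ∀ s ≤ t, ∀ x : Fin m → ℕ, ∑ i, x i = n → μ s x = mult n (πs s) x := by
  have main : ∀ d : ℕ, ∀ s, s + d = t → ∀ x : Fin m → ℕ, ∑ i, x i = n →
      μ s x = mult n (πs s) x := by
    intro d
    induction d with
    | zero =>
      intro s hs x hx
      have : s = t := by omega
      subst this
      rw [hμt, hπt]
    | succ d ih =>
      intro s hs x hx
      have hst : s < t := by omega
      have h1 : s + 1 + d = t := by omega
      set q : Fin m → ℝ := fun i => ∑ j, pf s j * K (s + 1) j i with hqdef
      have hqpos : ∀ i, 0 < q i := hpos s hst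
      have hqne : ∀ i, q i ≠ 0 := fun i => (hqpos i).ne'
      set r : Fin m → ℝ := fun i => πs (s + 1) i / q i with hrdef
      rw [hμ s hst x]
      have step : ∀ x' ∈ vecSet m n,
          μ (s + 1) x' * (mult n (pf s) x * kerM (K (s + 1)) x x' / mult n q x')
            = mult n (pf s) x * ((∏ j, r j ^ x' j) * kerM (K (s + 1)) x x') := by
        intro x' hx'
        have hx'sum : ∑ i, x' i = n := (Finset.mem_filter.1 hx').2
        rw [ih (s + 1) h1 x' hx'sum,
          mult_ratio n (πs (s + 1)) q hqne x']
        have hne := mult_ne_zero n q hqne x'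
        have hP : (∏ j, (πs (s + 1) j / q j) ^ x' j) = ∏ j, r j ^ x' j := rfl
        rw [hP]
        calc (∏ j, r j ^ x' j) * mult n q x' *
              (mult n (pf s) x * kerM (K (s + 1)) x x' / mult n q x')
            = mult n (pf s) x * ((∏ j, r j ^ x' j) * kerM (K (s + 1)) x x') *
              (mult n q x' / mult n q x') := by ring
          _ = mult n (pf s) x * ((∏ j, r j ^ x' j) * kerM (K (s + 1)) x x') := by
              rw [div_self hne, mul_one]
      rw [Finset.sum_congr rfl step, ← Finset.mul_sum,
        key n x hx (K (s + 1)) r]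
      have hπs : πs s = fun i => pf s i * ∑ j, K (s + 1) i j * r j := by
        funext i
        rw [hπ s hst i, Finset.mul_sum]
        refine Finset.sum_congr rfl fun j _ => ?_
        rw [hrdef]
        simp only
        rw [hqdef]
        ring
      rw [hπs, mult_mul]
  intro s hs x hx
  exact main (t - s) s (by omega) x hx
end

section
/- Let m, n be positive integers, let P be an m×m matrix with nonnegative entries summing to 1 whose column sums π^{(j)} = ∑_i P^{(i,j)} are all positive, and let K be an m×m row-stochastic matrix. Then for all m×m nonnegative-integer matrices Z, Z' each with total sum n: Mult(n,P)(Z) · M̄(Z, K, Z') = Mult(n, (π⊗1)∘K)(Z') · 𝟙[1ᵀZ = (Z'·1)ᵀ] · ∏_{j=1}^m ( (Z'·1)^{(j)}! ∏_{i=1}^m (P^{(i,j)}/π^{(j)})^{Z^{(i,j)}} / Z^{(i,j)}! ), where ((π⊗1)∘K)^{(i,j)} = π^{(i)} K^{(i,j)}. Consequently, for fixed Z' the normalized function Z ↦ Mult(n,P)(Z) M̄(Z,K,Z') / ∑_W Mult(n,P)(W) M̄(W,K,Z') is the probability mass function of a random matrix whose columns are independent, with column j distributed as Mult((Z'·1)^{(j)},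 (P^{(1,j)}/π^{(j)}, …, P^{(m,j)}/π^{(j)})). -/
open Finset

/-- The backward kernel `B(Z', Z)`: zero unless the column sums of `Z` equal the row sums
of `Z'`, in which case the columns of `Z` are independent with column `j` distributed
`Mult((Z'·1)⁽ʲ⁾, P⁽'ʲ⁾/π⁽ʲ⁾)`, where `π` is the column-sum vector of `P`. -/
noncomputable def backB {m : ℕ} (P : Fin m → Fin m → ℝ) (Z' Z : Fin m → Fin m → ℕ) : ℝ :=
  if ∀ j, ∑ i, Z i j = ∑ k, Z' j k then
    ∏ j, (Nat.factorial (∑ k, Z' j k) : ℝ) *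
      ∏ i, (P i j / ∑ k, P k j) ^ Z i j / (Nat.factorial (Z i j) : ℝ)
  else 0


lemma box_filter_eq {m n s : ℕ} (hs : s ≤ n) :
    (Fintype.piFinset fun _ : Fin m => Finset.range (n+1)).filter
      (fun v => ∑ i, v i = s) = Finset.piAntidiag Finset.univ s := by
  ext v
  simp only [Finset.mem_filter, Fintype.mem_piFinset, Finset.mem_range,
    Finset.mem_piAntidiag, Finset.mem_univ, implies_true, and_true, ne_eq]
  constructor
  · exact fun h => h.2
  · intro h
    refine ⟨fun i => ?_, h⟩
    have h2 : v i ≤ ∑ x, v x :=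
      Finset.single_le_sum (f := v) (fun i _ => Nat.zero_le _) (Finset.mem_univ i)
    have h3 : (∑ x, v x) = Finset.univ.sum v := rfl
    omega

lemma multinomial_pmf_sum {m : ℕ} {n s : ℕ} (hs : s ≤ n) (q : Fin m → ℝ)
    (hq : ∑ i, q i = 1) :
    ∑ v ∈ Fintype.piFinset (fun _ : Fin m => Finset.range (n+1)),
      (if ∑ i, v i = s then
        (Nat.factorial s : ℝ) * ∏ i, q i ^ v i / (Nat.factorial (v i) : ℝ) else 0) = 1 := by
  rw [← Finset.sum_filter, box_filter_eq hs]
  have key : ∀ v ∈ Finset.piAntidiag (Finset.univ : Finset (Fin m)) s,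
      (Nat.factorial s : ℝ) * ∏ i, q i ^ v i / (Nat.factorial (v i) : ℝ)
        = (Nat.multinomial Finset.univ v : ℝ) * ∏ i, q i ^ v i := by
    intro v hv
    rw [Finset.mem_piAntidiag] at hv
    have hspec := Nat.multinomial_spec (Finset.univ : Finset (Fin m)) v
    rw [hv.1] at hspec
    have h0 : (∏ i, (Nat.factorial (v i) : ℝ)) ≠ 0 := by positivity
    rw [Finset.prod_div_distrib, ← hspec]
    push_cast
    field_simp
  rw [Finset.sum_congr rfl key, ← Finset.sum_pow_eq_sum_piAntidiag, hq, one_pow]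

lemma part1 {m : ℕ} (n : ℕ) (P : Fin m → Fin m → ℝ) (hcol : ∀ j, 0 < ∑ i, P i j)
    (K : Fin m → Fin m → ℝ) (Z Z' : Fin m → Fin m → ℕ) :
    matMult n P Z * Mbar Z K Z'
      = matMult n (fun i j => (∑ k, P k i) * K i j) Z' * backB P Z' Z := by
  unfold matMult Mbar backB
  by_cases h : ∀ j, ∑ i, Z i j = ∑ k, Z' j k
  · rw [if_pos (fun i => (h i).symm), if_pos h]
    have hπ : ∀ j, (∑ k, P k j) ≠ 0 := fun j => (hcol j).ne'
    have e1 : (∏ i, ∏ j, ((∑ k, P k i) * K i j) ^ Z' i j / (Nat.factorial (Z' i j) : ℝ))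
        = (∏ i, (∑ k, P k i) ^ (∑ j, Z' i j)) *
          ∏ i, ∏ j, K i j ^ Z' i j / (Nat.factorial (Z' i j) : ℝ) := by
      rw [← Finset.prod_mul_distrib]
      refine Finset.prod_congr rfl fun i _ => ?_
      rw [← Finset.prod_pow_eq_pow_sum, ← Finset.prod_mul_distrib]
      exact Finset.prod_congr rfl fun j _ => by rw [mul_pow, mul_div_assoc]
    have e2 : (∏ j, ∏ i, (P i j / ∑ k, P k j) ^ Z i j / (Nat.factorial (Z i j) : ℝ))
        = (∏ j, ((∑ k, P k j) ^ (∑ i, Z i j))⁻¹) *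
          ∏ j, ∏ i, P i j ^ Z i j / (Nat.factorial (Z i j) : ℝ) := by
      rw [← Finset.prod_mul_distrib]
      refine Finset.prod_congr rfl fun j _ => ?_
      rw [← Finset.prod_pow_eq_pow_sum, ← Finset.prod_inv_distrib, ← Finset.prod_mul_distrib]
      refine Finset.prod_congr rfl fun i _ => ?_
      rw [div_pow]; ring
    have hPi : (∏ j, ((∑ k, P k j) ^ (∑ i, Z i j))⁻¹)
        = (∏ i, (∑ k, P k i) ^ (∑ j, Z' i j))⁻¹ := by
      rw [← Finset.prod_inv_distrib]
      exact Finset.prod_congr rfl fun j _ => by rw [h j]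
    have hne : (∏ i, (∑ k, P k i) ^ (∑ j, Z' i j)) ≠ 0 :=
      Finset.prod_ne_zero_iff.mpr fun i _ => pow_ne_zero _ (hπ i)
    simp only [Finset.prod_mul_distrib, e1, e2, hPi]
    field_simp
    have c1 : ∏ x : Fin m, ∏ y : Fin m, P y x ^ Z y x
        = ∏ x : Fin m, ∏ y : Fin m, P x y ^ Z x y := Finset.prod_comm
    have c2 : ∏ x : Fin m, ∏ y : Fin m, (Nat.factorial (Z y x) : ℝ)
        = ∏ x : Fin m, ∏ y : Fin m, (Nat.factorial (Z x y) : ℝ) := Finset.prod_comm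
    rw [Finset.prod_comm (s := Finset.univ) (t := Finset.univ) (f := fun x y => P y x ^ Z y x / (Nat.factorial (Z y x) : ℝ))]
    ring
  · have hm : ¬ ∀ i, ∑ j, Z' i j = ∑ k, Z k i := fun hc => h fun j => (hc j).symm
    rw [if_neg hm, if_neg h]
    simp

lemma backB_eq_prod {m : ℕ} (P : Fin m → Fin m → ℝ) (Z' W : Fin m → Fin m → ℕ) :
    backB P Z' W = ∏ j, (if ∑ i, W i j = ∑ k, Z' j k then
      (Nat.factorial (∑ k, Z' j k) : ℝ) *
        ∏ i, (P i j / ∑ k, P k j) ^ W i j / (Nat.factorial (W i j) : ℝ) else 0) := by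
  unfold backB
  by_cases h : ∀ j, ∑ i, W i j = ∑ k, Z' j k
  · rw [if_pos h]; exact Finset.prod_congr rfl fun j _ => (if_pos (h j)).symm
  · rw [if_neg h]
    push_neg at h
    obtain ⟨j0, hj0⟩ := h
    refine (Finset.prod_eq_zero (Finset.mem_univ j0) ?_).symm
    exact if_neg hj0

lemma sum_backB {m n : ℕ} (P : Fin m → Fin m → ℝ) (hcol : ∀ j, 0 < ∑ i, P i j)
    (Z' : Fin m → Fin m → ℕ) (hZ' : ∑ i, ∑ j, Z' i j = n) :
    ∑ W ∈ matSet m n, backB P Z' W = 1 := by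
  have hs : ∀ j, ∑ k, Z' j k ≤ n := by
    intro j
    have h2 : (∑ k, Z' j k) ≤ ∑ i, ∑ k, Z' i k :=
      Finset.single_le_sum (f := fun i => ∑ k, Z' i k) (fun i _ => Nat.zero_le _)
        (Finset.mem_univ j)
    omega
  have hq : ∀ j, ∑ i, P i j / ∑ k, P k j = 1 := by
    intro j
    rw [← Finset.sum_div, div_self (hcol j).ne']
  have hstep : ∑ W ∈ matSet m n, backB P Z' W
      = ∑ W ∈ (Fintype.piFinset fun _ : Fin m => Fintype.piFinset fun _ : Fin m =>
          Finset.range (n + 1)), backB P Z' W := by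
    unfold matSet
    apply Finset.sum_filter_of_ne
    intro W _ hne
    have hcond : ∀ j, ∑ i, W i j = ∑ k, Z' j k := by
      by_contra hc
      exact hne (by unfold backB; rw [if_neg hc])
    rw [Finset.sum_comm]
    calc ∑ j, ∑ i, W i j = ∑ j, ∑ k, Z' j k := Finset.sum_congr rfl fun j _ => hcond j
      _ = n := hZ'
  rw [hstep]
  calc ∑ W ∈ (Fintype.piFinset fun _ : Fin m => Fintype.piFinset fun _ : Fin m =>
          Finset.range (n + 1)), backB P Z' W
      = ∑ V ∈ (Fintype.piFinset fun _ : Fin m => Fintype.piFinset fun _ : Fin m =>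
          Finset.range (n + 1)),
          ∏ j, (if ∑ i, V j i = ∑ k, Z' j k then
            (Nat.factorial (∑ k, Z' j k) : ℝ) *
              ∏ i, (P i j / ∑ k, P k j) ^ V j i / (Nat.factorial (V j i) : ℝ) else 0) := by
        apply Finset.sum_nbij' (fun W => fun j i => W i j) (fun V => fun i j => V j i)
        · intro a ha
          simp only [Fintype.mem_piFinset, Finset.mem_range] at ha ⊢
          exact fun j i => ha i j
        · intro a ha
          simp only [Fintype.mem_piFinset, Finset.mem_range] at ha ⊢
          exact fun i j => ha j i
        · intro a _; rfl
        · intro a _; rfl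
        · intro a _; exact backB_eq_prod P Z' a
    _ = ∏ j, ∑ v ∈ Fintype.piFinset (fun _ : Fin m => Finset.range (n + 1)),
          (if ∑ i, v i = ∑ k, Z' j k then
            (Nat.factorial (∑ k, Z' j k) : ℝ) *
              ∏ i, (P i j / ∑ k, P k j) ^ v i / (Nat.factorial (v i) : ℝ) else 0) :=
        (Finset.prod_univ_sum
          (fun _ : Fin m => Fintype.piFinset fun _ : Fin m => Finset.range (n + 1))
          (fun j v => if ∑ i, v i = ∑ k, Z' j k then
            (Nat.factorial (∑ k, Z' j k) : ℝ) *
              ∏ i, (P i j / ∑ k, P k j) ^ v i / (Nat.factorial (v i) : ℝ) else 0)).symm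
    _ = ∏ j : Fin m, (1 : ℝ) := Finset.prod_congr rfl fun j _ =>
        multinomial_pmf_sum (hs j) _ (hq j)
    _ = 1 := Finset.prod_const_one


/-- Time reversal for transition-count matrices:
`Mult(n,P)(Z)·M̄(Z,K,Z') = Mult(n,(π⊗1)∘K)(Z')·B(Z',Z)`, and consequently (whenever the
normalizer is positive) the normalized function `Z ↦ Mult(n,P)(Z)M̄(Z,K,Z')/∑_W ⋯` equals
the pmf `B(Z', ·)` of a random matrix with independent columns, column `j` distributed
`Mult((Z'·1)⁽ʲ⁾, P⁽'ʲ⁾/π⁽ʲ⁾)`. -/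
theorem statement10 (m n : ℕ) (hm : 0 < m) (hn : 0 < n)
    (P : Fin m → Fin m → ℝ) (hP0 : ∀ i j, 0 ≤ P i j) (hP1 : ∑ i, ∑ j, P i j = 1)
    (hcol : ∀ j, 0 < ∑ i, P i j)
    (K : Fin m → Fin m → ℝ) (hK0 : ∀ i j, 0 ≤ K i j) (hK1 : ∀ i, ∑ j, K i j = 1)
    (Z Z' : Fin m → Fin m → ℕ)
    (hZ : ∑ i, ∑ j, Z i j = n) (hZ' : ∑ i, ∑ j, Z' i j = n) :
    (matMult n P Z * Mbar Z K Z'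
        = matMult n (fun i j => (∑ k, P k i) * K i j) Z' * backB P Z' Z) ∧
    (0 < ∑ W ∈ matSet m n, matMult n P W * Mbar W K Z' →
      matMult n P Z * Mbar Z K Z' / (∑ W ∈ matSet m n, matMult n P W * Mbar W K Z')
        = backB P Z' Z) := by
  constructor
  · exact part1 n P hcol K Z Z'
  · intro hpos
    have hS : ∑ W ∈ matSet m n, matMult n P W * Mbar W K Z'
        = matMult n (fun i j => (∑ k, P k i) * K i j) Z' := by
      rw [Finset.sum_congr rfl (fun W _ => part1 n P hcol K W Z'), ← Finset.mul_sum,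
        sum_backB P hcol Z' hZ', mul_one]
    rw [part1 n P hcol K Z Z', hS]
    exact mul_div_cancel_left₀ _ (by rw [hS] at hpos; exact hpos.ne')
end

section
/- Let m, n be positive integers, π ∈ ℝ^m a probability vector, and K an m×m row-stochastic matrix. Then for all x, x' ∈ S_{m,n}: Mult(n,π)(x) · M(x, K, x') = ∑_{Z ∈ T(x,x')} n! ∏_{i,j=1}^m (π^{(i)} K^{(i,j)})^{Z^{(i,j)}} / Z^{(i,j)}!, where T(x,x') is the set of m×m nonnegative-integer matrices Z with row sums Z·1 = x and column sums (1ᵀZ)ᵀ = x' (so that ∑_{i,j} Z^{(i,j)} = n). That is, the product of the multinomial mass of x and the transition kernel M(x,K,x') equals the sum over compatible transition-count matrices of the Mult(n, (π⊗1)∘K) masses, where ((π⊗1)∘K)^{(i,j)} = π^{(i)} K^{(i,j)}. -/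
open Finset

/-- The product of the multinomial mass of `x` and the transition kernel `M(x, K, x')`
equals the sum, over compatible transition-count matrices `Z ∈ T(x, x')`, of the
`Mult(n, (π⊗1)∘K)` masses `n! ∏ᵢⱼ (π⁽ⁱ⁾K⁽ⁱʲ⁾)^{Z⁽ⁱʲ⁾}/Z⁽ⁱʲ⁾!`. -/
theorem statement14 (m n : ℕ) (hm : 0 < m) (hn : 0 < n)
    (π : Fin m → ℝ) (hπ0 : ∀ i, 0 ≤ π i) (hπ1 : ∑ i, π i = 1)
    (K : Fin m → Fin m → ℝ) (hK0 : ∀ i j, 0 ≤ K i j) (hK1 : ∀ i, ∑ j, K i j = 1)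
    (x x' : Fin m → ℕ) (hx : ∑ i, x i = n) (hx' : ∑ i, x' i = n) :
    mult n π x * kerM K x x'
      = ∑ Z ∈ transSet x x', (Nat.factorial n : ℝ) *
          ∏ i, ∏ j, (π i * K i j) ^ Z i j / (Nat.factorial (Z i j) : ℝ) := by
  unfold mult kerM
  rw [Finset.mul_sum]
  refine Finset.sum_congr rfl fun Z hZ => ?_
  simp only [transSet, Finset.mem_filter] at hZ
  obtain ⟨-, hrow, -⟩ := hZ
  rw [mul_assoc, ← Finset.prod_mul_distrib]
  congr 1
  refine Finset.prod_congr rfl fun i _ => ?_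
  have hfac : (Nat.factorial (x i) : ℝ) ≠ 0 :=
    Nat.cast_ne_zero.2 (Nat.factorial_ne_zero _)
  have hpow : π i ^ x i = ∏ j, π i ^ Z i j := by
    rw [Finset.prod_pow_eq_pow_sum, hrow i]
  calc π i ^ x i / (Nat.factorial (x i) : ℝ) *
        ((Nat.factorial (x i) : ℝ) * ∏ j, K i j ^ Z i j / (Nat.factorial (Z i j) : ℝ))
      = π i ^ x i * ∏ j, K i j ^ Z i j / (Nat.factorial (Z i j) : ℝ) := by
        field_simp
    _ = ∏ j, (π i * K i j) ^ Z i j / (Nat.factorial (Z i j) : ℝ) := by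
        rw [hpow, ← Finset.prod_mul_distrib]
        exact Finset.prod_congr rfl fun j _ => by rw [mul_pow, mul_div_assoc]
end
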